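/- The double integral ∫₀¹∫₀¹ 3(1-a)³/(3-(1-a)(2-b)) db da equals (189/8)·ln 3 − 26·ln 2 − 15/2. -/

import Mathlib

/-!
The denominator is affine in `b`, so the inner integral is a logarithm:
`∫₀¹ 3(1-a)³/((1-a)b + 1 + 2a) db = 3(1-a)² (log (2+a) - log (1+2a))`.
Since `1 - a = 3 - (2+a) = (3 - (1+2a))/2`, both terms of the outer integrand are affine
reparametrisations of `3(t-3)² log t`, whose primitive `P` is elementary; the outer integral is
`P 3 - P 2 - (P 3 - P 1)/8`.
-/

open Real intervalIntegral

lemma integral_div_mul_add {c d : ℝ} (hd : 0 < d) (hcd : 0 < c + d) :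
    ∫ x in (0:ℝ)..1, c / (c * x + d) = log (c + d) - log d := by
  rcases eq_or_ne c 0 with rfl | hc
  · simp
  simp_rw [div_eq_mul_inv c]
  rw [integral_const_mul, integral_comp_mul_add (fun x => x⁻¹) hc, mul_zero, zero_add, mul_one,
    integral_inv_of_pos hd hcd, log_div hcd.ne' hd.ne', smul_eq_mul, mul_inv_cancel_left₀ hc]

lemma stit_inner_integral {a : ℝ} (ha : 0 ≤ a) :
    ∫ b in (0:ℝ)..1, 3 * (1 - a)^3 / (3 - (1 - a) * (2 - b))
      = 3 * (1 - a)^2 * (log (2 + a) - log (1 + 2 * a)) := by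
  have hfactor : (fun b : ℝ => 3 * (1 - a)^3 / (3 - (1 - a) * (2 - b)))
      = fun b => 3 * (1 - a)^2 * ((1 - a) / ((1 - a) * b + (1 + 2 * a))) := by
    funext b
    ring
  rw [hfactor, integral_const_mul, integral_div_mul_add (by linarith) (by linarith),
    show 1 - a + (1 + 2 * a) = 2 + a by ring]

/-- `(t-3)³ + 27` is the primitive of `3(t-3)²` vanishing at `0`, which makes the
integration by parts against `log t` produce a polynomial. -/
noncomputable def sqMulLogPrimitive (t : ℝ) : ℝ :=
  ((t - 3)^3 + 27) * log t - (t^3 / 3 - 9 / 2 * t^2 + 27 * t)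

lemma hasDerivAt_sqMulLogPrimitive {t : ℝ} (ht : t ≠ 0) :
    HasDerivAt sqMulLogPrimitive (3 * (t - 3)^2 * log t) t := by
  have h := (((hasDerivAt_id t).sub_const 3).pow 3 |>.add_const 27).mul (hasDerivAt_log ht)
    |>.sub ((((hasDerivAt_pow 3 t).div_const 3).sub ((hasDerivAt_pow 2 t).const_mul (9 / 2))).add
      ((hasDerivAt_id t).const_mul 27))
  refine h.congr_deriv ?_
  simp only [id, Pi.pow_apply]
  field_simp
  ring

lemma hasDerivAt_stit_outerPrimitive {a : ℝ} (ha : 0 ≤ a) :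
    HasDerivAt (fun a => sqMulLogPrimitive (2 + a) - sqMulLogPrimitive (1 + 2 * a) / 8)
      (3 * (1 - a)^2 * (log (2 + a) - log (1 + 2 * a))) a := by
  have h₁ := (hasDerivAt_sqMulLogPrimitive (t := 2 + a) (by linarith)).comp a
    ((hasDerivAt_id a).const_add 2)
  have h₂ := (hasDerivAt_sqMulLogPrimitive (t := 1 + 2 * a) (by linarith)).comp a
    (((hasDerivAt_id a).const_mul 2).const_add 1)
  exact (h₁.sub (h₂.div_const 8)).congr_deriv (by ring)

lemma intervalIntegrable_stit_outer :
    IntervalIntegrable (fun a : ℝ => 3 * (1 - a)^2 * (log (2 + a) - log (1 + 2 * a)))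
      MeasureTheory.volume 0 1 := by
  refine ContinuousOn.intervalIntegrable ?_
  rw [Set.uIcc_of_le zero_le_one]
  refine ContinuousOn.mul (by fun_prop) (ContinuousOn.sub ?_ ?_) <;>
    refine ContinuousOn.log (by fun_prop) fun a ha => ?_ <;>
    linarith [ha.1]

theorem stit_p0 :
    (∫ a in (0:ℝ)..1, ∫ b in (0:ℝ)..1,
        3 * (1 - a)^3 / (3 - (1 - a) * (2 - b)))
      = 189/8 * Real.log 3 - 26 * Real.log 2 - 15/2 := by
  have hIcc : ∀ a ∈ Set.uIcc (0:ℝ) 1, 0 ≤ a := fun a ha =>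
    (Set.uIcc_of_le (zero_le_one' ℝ) ▸ ha).1
  rw [integral_congr fun a ha => stit_inner_integral (hIcc a ha),
    integral_eq_sub_of_hasDerivAt (fun a ha => hasDerivAt_stit_outerPrimitive (hIcc a ha))
      intervalIntegrable_stit_outer]
  simp only [sqMulLogPrimitive]
  norm_num
  ring
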